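/- Let L1, L2 > 0 and Ω = (0,L1)×(0,L2). Let α1, α2, β1, β2 be continuously differentiable real-valued functions on the closed rectangle [0,L1]×[0,L2] with α1(x,y) ≥ c0 and α2(x,y) ≥ c0 for some constant c0 > 0, and set T1(x,y) = [[α1, β1], [β1, −α1]] and T2(x,y) = [[α2, β2], [β2, −α2]]. Set ω0 = (1/2)·sup_{(x,y)∈[0,L1]×[0,L2]} ((∂x α1 + ∂y α2)² + (∂x β1 + ∂y β2)²)^{1/2}. Then for every pair u = (u1, u2) of functions continuously differentiable on the closed rectangle with u1 = 0 on Γ_W ∪ Γ_S and u2 = 0 on Γ_E ∪ Γ_N, one has ∫_Ω u(x,y)ᵗ·(T1(x,y)·∂x u(x,y) + T2(x,y)·∂y u(x,y)) dx dy ≥ −ω0·∫_Ω |u(x,y)|² dx dy. -/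

import Mathlib

/-!
Since `T = [[a, b], [b, -a]]` is symmetric, `uᵗ T ∂u = ½ ∂(uᵗ T u) - ½ uᵗ (∂T) u`. The boundary
conditions make the flux `uᵗ T1 u = α1 (u1² - u2²) + 2 β1 u1 u2` equal to `-α1 u2² ≤ 0` on `Γ_W` and
to `α1 u1² ≥ 0` on `Γ_E` (and likewise for `T2` on `Γ_S`, `Γ_N`), so the integrated derivative terms
are nonnegative. What remains is `-½ uᵗ (∂x T1 + ∂y T2) u`, and a matrix `[[a, b], [b, -a]]` has
eigenvalues `±√(a² + b²)`.
-/

open Set MeasureTheory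

/-- The closed rectangle `[0,L1] × [0,L2]`. -/
def Rect (L1 L2 : ℝ) : Set (ℝ × ℝ) := Icc 0 L1 ×ˢ Icc 0 L2

/-- The open rectangle `Ω = (0,L1) × (0,L2)`. -/
def Om (L1 L2 : ℝ) : Set (ℝ × ℝ) := Ioo 0 L1 ×ˢ Ioo 0 L2

/-- The partial derivative `∂x f` on the closed rectangle. -/
noncomputable def pdx (L1 L2 : ℝ) (f : ℝ × ℝ → ℝ) (p : ℝ × ℝ) : ℝ :=
  fderivWithin ℝ f (Rect L1 L2) p (1, 0)

/-- The partial derivative `∂y f` on the closed rectangle. -/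
noncomputable def pdy (L1 L2 : ℝ) (f : ℝ × ℝ → ℝ) (p : ℝ × ℝ) : ℝ :=
  fderivWithin ℝ f (Rect L1 L2) p (0, 1)

/-- The bilinear form `(v, w) · [[a, b], [b, -a]] · (v', w')ᵗ` of the coefficient matrices. -/
def reflForm (a b v w v' w' : ℝ) : ℝ := v * (a * v' + b * w') + w * (b * v' - a * w')

theorem abs_reflForm_self_le (a b v w : ℝ) :
    |reflForm a b v w v w| ≤ √(a ^ 2 + b ^ 2) * (v ^ 2 + w ^ 2) := by
  rw [← Real.sqrt_sq (by positivity : 0 ≤ v ^ 2 + w ^ 2), ← Real.sqrt_mul (by positivity)]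
  apply Real.abs_le_sqrt
  have : reflForm a b v w v w ^ 2 + (2 * a * v * w - b * (v ^ 2 - w ^ 2)) ^ 2
      = (a ^ 2 + b ^ 2) * (v ^ 2 + w ^ 2) ^ 2 := by
    unfold reflForm; ring
  nlinarith [sq_nonneg (2 * a * v * w - b * (v ^ 2 - w ^ 2))]

theorem HasDerivAt.reflForm_self {a b v w : ℝ → ℝ} {a' b' v' w' t : ℝ}
    (ha : HasDerivAt a a' t) (hb : HasDerivAt b b' t) (hv : HasDerivAt v v' t)
    (hw : HasDerivAt w w' t) :
    HasDerivAt (fun s => reflForm (a s) (b s) (v s) (w s) (v s) (w s))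
      (reflForm a' b' (v t) (w t) (v t) (w t) + 2 * reflForm (a t) (b t) (v t) (w t) v' w') t := by
  unfold reflForm
  refine ((hv.fun_mul ((ha.fun_mul hv).fun_add (hb.fun_mul hw))).fun_add
    (hw.fun_mul ((hb.fun_mul hv).fun_sub (ha.fun_mul hw)))).congr_deriv ?_
  ring

section Rectangle

variable {L1 L2 : ℝ}

theorem isCompact_rect : IsCompact (Rect L1 L2) := isCompact_Icc.prod isCompact_Icc

theorem om_subset_rect : Om L1 L2 ⊆ Rect L1 L2 :=
  prod_mono Ioo_subset_Icc_self Ioo_subset_Icc_self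

theorem isOpen_om : IsOpen (Om L1 L2) := isOpen_Ioo.prod isOpen_Ioo

theorem rect_mem_nhds {p : ℝ × ℝ} (hp : p ∈ Om L1 L2) : Rect L1 L2 ∈ nhds p :=
  Filter.mem_of_superset (isOpen_om.mem_nhds hp) om_subset_rect

theorem integrableOn_om {g : ℝ × ℝ → ℝ} (hg : ContinuousOn g (Rect L1 L2)) :
    IntegrableOn g (Om L1 L2) :=
  (hg.integrableOn_compact isCompact_rect).mono_set om_subset_rect

theorem continuousOn_fderivWithin_rect (hL1 : 0 < L1) (hL2 : 0 < L2) {f : ℝ × ℝ → ℝ}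
    (hf : ContDiffOn ℝ 1 f (Rect L1 L2)) (v : ℝ × ℝ) :
    ContinuousOn (fun p => fderivWithin ℝ f (Rect L1 L2) p v) (Rect L1 L2) :=
  (hf.continuousOn_fderivWithin ((uniqueDiffOn_Icc hL1).prod (uniqueDiffOn_Icc hL2))
    le_rfl).clm_apply continuousOn_const

theorem continuousOn_pdx (hL1 : 0 < L1) (hL2 : 0 < L2) {f : ℝ × ℝ → ℝ}
    (hf : ContDiffOn ℝ 1 f (Rect L1 L2)) : ContinuousOn (pdx L1 L2 f) (Rect L1 L2) :=
  continuousOn_fderivWithin_rect hL1 hL2 hf (1, 0)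

theorem continuousOn_pdy (hL1 : 0 < L1) (hL2 : 0 < L2) {f : ℝ × ℝ → ℝ}
    (hf : ContDiffOn ℝ 1 f (Rect L1 L2)) : ContinuousOn (pdy L1 L2 f) (Rect L1 L2) :=
  continuousOn_fderivWithin_rect hL1 hL2 hf (0, 1)

theorem hasFDerivAt_fderivWithin_rect {f : ℝ × ℝ → ℝ} (hf : ContDiffOn ℝ 1 f (Rect L1 L2))
    {p : ℝ × ℝ} (hp : p ∈ Om L1 L2) : HasFDerivAt f (fderivWithin ℝ f (Rect L1 L2) p) p := by
  rw [fderivWithin_of_mem_nhds (rect_mem_nhds hp)]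
  exact ((hf.differentiableOn one_ne_zero p (om_subset_rect hp)).differentiableAt
    (rect_mem_nhds hp)).hasFDerivAt

theorem hasDerivAt_pdx {f : ℝ × ℝ → ℝ} (hf : ContDiffOn ℝ 1 f (Rect L1 L2))
    {p : ℝ × ℝ} (hp : p ∈ Om L1 L2) :
    HasDerivAt (fun x => f (x, p.2)) (pdx L1 L2 f p) p.1 :=
  (hasFDerivAt_fderivWithin_rect hf hp).comp_hasDerivAt p.1
    ((hasDerivAt_id p.1).prodMk (hasDerivAt_const p.1 p.2))

theorem hasDerivAt_pdy {f : ℝ × ℝ → ℝ} (hf : ContDiffOn ℝ 1 f (Rect L1 L2))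
    {p : ℝ × ℝ} (hp : p ∈ Om L1 L2) :
    HasDerivAt (fun y => f (p.1, y)) (pdy L1 L2 f p) p.2 :=
  (hasFDerivAt_fderivWithin_rect hf hp).comp_hasDerivAt p.2
    ((hasDerivAt_const p.2 p.1).prodMk (hasDerivAt_id p.2))

theorem integral_om_eq_of_hasDerivAt_fst (hL1 : 0 ≤ L1) {F E : ℝ × ℝ → ℝ}
    (hF : ContinuousOn F (Rect L1 L2)) (hE : ContinuousOn E (Rect L1 L2))
    (hd : ∀ p ∈ Om L1 L2, HasDerivAt (fun x => F (x, p.2)) (E p) p.1) :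
    ∫ p in Om L1 L2, E p = ∫ y in Ioo 0 L2, (F (L1, y) - F (0, y)) := by
  have hint : Integrable E
      (((volume : Measure ℝ).restrict (Ioo 0 L1)).prod (volume.restrict (Ioo 0 L2))) := by
    rw [Measure.prod_restrict]; exact integrableOn_om hE
  rw [Om, Measure.volume_eq_prod, ← Measure.prod_restrict, integral_prod_symm E hint]
  refine setIntegral_congr_fun measurableSet_Ioo fun y hy => ?_
  have hmaps : MapsTo (fun x => (x, y)) (Icc 0 L1) (Rect L1 L2) :=
    fun x hx => ⟨hx, Ioo_subset_Icc_self hy⟩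
  have hslice : ContinuousOn (fun x : ℝ => (x, y)) (Icc 0 L1) := by fun_prop
  rw [← integral_Ioc_eq_integral_Ioo, ← intervalIntegral.integral_of_le hL1]
  exact intervalIntegral.integral_eq_sub_of_hasDerivAt_of_le hL1 (hF.comp hslice hmaps)
    (fun x hx => hd (x, y) ⟨hx, hy⟩) ((hE.comp hslice hmaps).intervalIntegrable_of_Icc hL1)

theorem integral_om_eq_of_hasDerivAt_snd (hL2 : 0 ≤ L2) {F E : ℝ × ℝ → ℝ}
    (hF : ContinuousOn F (Rect L1 L2)) (hE : ContinuousOn E (Rect L1 L2))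
    (hd : ∀ p ∈ Om L1 L2, HasDerivAt (fun y => F (p.1, y)) (E p) p.2) :
    ∫ p in Om L1 L2, E p = ∫ x in Ioo 0 L1, (F (x, L2) - F (x, 0)) := by
  have hswap : MapsTo Prod.swap (Rect L2 L1) (Rect L1 L2) := fun p hp => ⟨hp.2, hp.1⟩
  calc ∫ p in Om L1 L2, E p = ∫ p in Om L2 L1, E p.swap := by
        rw [Om, Om, Measure.volume_eq_prod, setIntegral_prod_swap]
    _ = _ := integral_om_eq_of_hasDerivAt_fst hL2 (hF.comp continuous_swap.continuousOn hswap)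
        (hE.comp continuous_swap.continuousOn hswap) (fun p hp => hd p.swap ⟨hp.2, hp.1⟩)

theorem neg_mul_integral_le_neg_half_integral_reflForm {ω : ℝ} {a b v w : ℝ × ℝ → ℝ}
    (ha : ContinuousOn a (Rect L1 L2)) (hb : ContinuousOn b (Rect L1 L2))
    (hv : ContinuousOn v (Rect L1 L2)) (hw : ContinuousOn w (Rect L1 L2))
    (hω : ∀ p ∈ Rect L1 L2, √(a p ^ 2 + b p ^ 2) ≤ 2 * ω) :
    -ω * ∫ p in Om L1 L2, (v p ^ 2 + w p ^ 2)
      ≤ -(1 / 2) * ∫ p in Om L1 L2, reflForm (a p) (b p) (v p) (w p) (v p) (w p) := by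
  rw [← integral_const_mul, ← integral_const_mul]
  refine setIntegral_mono_on ?_ ?_ isOpen_om.measurableSet fun p hp => ?_
  · exact integrableOn_om (by fun_prop)
  · exact integrableOn_om (by unfold reflForm; fun_prop)
  have hsq : 0 ≤ v p ^ 2 + w p ^ 2 := by positivity
  nlinarith [le_abs_self (reflForm (a p) (b p) (v p) (w p) (v p) (w p)),
    abs_reflForm_self_le (a p) (b p) (v p) (w p),
    mul_le_mul_of_nonneg_right (hω p (om_subset_rect hp)) hsq]

section Flux

variable {α β u1 u2 : ℝ × ℝ → ℝ}

theorem integral_reflForm_pdx_nonneg (hL1 : 0 < L1) (hL2 : 0 < L2)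
    (hα : ContDiffOn ℝ 1 α (Rect L1 L2)) (hβ : ContDiffOn ℝ 1 β (Rect L1 L2))
    (hu1 : ContDiffOn ℝ 1 u1 (Rect L1 L2)) (hu2 : ContDiffOn ℝ 1 u2 (Rect L1 L2))
    (hα0 : ∀ p ∈ Rect L1 L2, 0 ≤ α p)
    (h1W : ∀ y ∈ Icc (0 : ℝ) L2, u1 (0, y) = 0) (h2E : ∀ y ∈ Icc (0 : ℝ) L2, u2 (L1, y) = 0) :
    0 ≤ ∫ p in Om L1 L2, (reflForm (pdx L1 L2 α p) (pdx L1 L2 β p) (u1 p) (u2 p) (u1 p) (u2 p)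
      + 2 * reflForm (α p) (β p) (u1 p) (u2 p) (pdx L1 L2 u1 p) (pdx L1 L2 u2 p)) := by
  have cα := hα.continuousOn; have cβ := hβ.continuousOn
  have cu1 := hu1.continuousOn; have cu2 := hu2.continuousOn
  have cα' := continuousOn_pdx hL1 hL2 hα; have cβ' := continuousOn_pdx hL1 hL2 hβ
  have cu1' := continuousOn_pdx hL1 hL2 hu1; have cu2' := continuousOn_pdx hL1 hL2 hu2
  rw [integral_om_eq_of_hasDerivAt_fst hL1.le
    (F := fun p => reflForm (α p) (β p) (u1 p) (u2 p) (u1 p) (u2 p)) (by unfold reflForm; fun_prop)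
    (by unfold reflForm; fun_prop) fun p hp => (hasDerivAt_pdx hα hp).reflForm_self
      (hasDerivAt_pdx hβ hp) (hasDerivAt_pdx hu1 hp) (hasDerivAt_pdx hu2 hp)]
  refine setIntegral_nonneg measurableSet_Ioo fun y hy => ?_
  have hy' := Ioo_subset_Icc_self hy
  have hW := hα0 (0, y) ⟨left_mem_Icc.2 hL1.le, hy'⟩
  have hE := hα0 (L1, y) ⟨right_mem_Icc.2 hL1.le, hy'⟩
  simp only [reflForm, h1W y hy', h2E y hy']
  nlinarith [mul_nonneg hW (sq_nonneg (u2 (0, y))), mul_nonneg hE (sq_nonneg (u1 (L1, y)))]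

theorem integral_reflForm_pdy_nonneg (hL1 : 0 < L1) (hL2 : 0 < L2)
    (hα : ContDiffOn ℝ 1 α (Rect L1 L2)) (hβ : ContDiffOn ℝ 1 β (Rect L1 L2))
    (hu1 : ContDiffOn ℝ 1 u1 (Rect L1 L2)) (hu2 : ContDiffOn ℝ 1 u2 (Rect L1 L2))
    (hα0 : ∀ p ∈ Rect L1 L2, 0 ≤ α p)
    (h1S : ∀ x ∈ Icc (0 : ℝ) L1, u1 (x, 0) = 0) (h2N : ∀ x ∈ Icc (0 : ℝ) L1, u2 (x, L2) = 0) :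
    0 ≤ ∫ p in Om L1 L2, (reflForm (pdy L1 L2 α p) (pdy L1 L2 β p) (u1 p) (u2 p) (u1 p) (u2 p)
      + 2 * reflForm (α p) (β p) (u1 p) (u2 p) (pdy L1 L2 u1 p) (pdy L1 L2 u2 p)) := by
  have cα := hα.continuousOn; have cβ := hβ.continuousOn
  have cu1 := hu1.continuousOn; have cu2 := hu2.continuousOn
  have cα' := continuousOn_pdy hL1 hL2 hα; have cβ' := continuousOn_pdy hL1 hL2 hβ
  have cu1' := continuousOn_pdy hL1 hL2 hu1; have cu2' := continuousOn_pdy hL1 hL2 hu2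
  rw [integral_om_eq_of_hasDerivAt_snd hL2.le
    (F := fun p => reflForm (α p) (β p) (u1 p) (u2 p) (u1 p) (u2 p)) (by unfold reflForm; fun_prop)
    (by unfold reflForm; fun_prop) fun p hp => (hasDerivAt_pdy hα hp).reflForm_self
      (hasDerivAt_pdy hβ hp) (hasDerivAt_pdy hu1 hp) (hasDerivAt_pdy hu2 hp)]
  refine setIntegral_nonneg measurableSet_Ioo fun x hx => ?_
  have hx' := Ioo_subset_Icc_self hx
  have hS := hα0 (x, 0) ⟨hx', left_mem_Icc.2 hL2.le⟩
  have hN := hα0 (x, L2) ⟨hx', right_mem_Icc.2 hL2.le⟩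
  simp only [reflForm, h1S x hx', h2N x hx']
  nlinarith [mul_nonneg hS (sq_nonneg (u2 (x, 0))), mul_nonneg hN (sq_nonneg (u1 (x, L2)))]

theorem neg_half_integral_reflForm_div_le (hL1 : 0 < L1) (hL2 : 0 < L2)
    {α1 β1 α2 β2 : ℝ × ℝ → ℝ}
    (hα1 : ContDiffOn ℝ 1 α1 (Rect L1 L2)) (hβ1 : ContDiffOn ℝ 1 β1 (Rect L1 L2))
    (hα2 : ContDiffOn ℝ 1 α2 (Rect L1 L2)) (hβ2 : ContDiffOn ℝ 1 β2 (Rect L1 L2))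
    (hα1₀ : ∀ p ∈ Rect L1 L2, 0 ≤ α1 p) (hα2₀ : ∀ p ∈ Rect L1 L2, 0 ≤ α2 p)
    (hu1 : ContDiffOn ℝ 1 u1 (Rect L1 L2)) (hu2 : ContDiffOn ℝ 1 u2 (Rect L1 L2))
    (h1W : ∀ y ∈ Icc (0 : ℝ) L2, u1 (0, y) = 0) (h1S : ∀ x ∈ Icc (0 : ℝ) L1, u1 (x, 0) = 0)
    (h2E : ∀ y ∈ Icc (0 : ℝ) L2, u2 (L1, y) = 0) (h2N : ∀ x ∈ Icc (0 : ℝ) L1, u2 (x, L2) = 0) :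
    -(1 / 2) * ∫ p in Om L1 L2, reflForm (pdx L1 L2 α1 p + pdy L1 L2 α2 p)
        (pdx L1 L2 β1 p + pdy L1 L2 β2 p) (u1 p) (u2 p) (u1 p) (u2 p)
      ≤ ∫ p in Om L1 L2, (reflForm (α1 p) (β1 p) (u1 p) (u2 p) (pdx L1 L2 u1 p) (pdx L1 L2 u2 p)
        + reflForm (α2 p) (β2 p) (u1 p) (u2 p) (pdy L1 L2 u1 p) (pdy L1 L2 u2 p)) := by
  have hc := fun f (hf : ContDiffOn ℝ 1 f (Rect L1 L2)) =>
    (⟨hf.continuousOn, continuousOn_pdx hL1 hL2 hf, continuousOn_pdy hL1 hL2 hf⟩ :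
      ContinuousOn f _ ∧ ContinuousOn (pdx L1 L2 f) _ ∧ ContinuousOn (pdy L1 L2 f) _)
  obtain ⟨cα1, cα1x, -⟩ := hc α1 hα1
  obtain ⟨cβ1, cβ1x, -⟩ := hc β1 hβ1
  obtain ⟨cα2, -, cα2y⟩ := hc α2 hα2
  obtain ⟨cβ2, -, cβ2y⟩ := hc β2 hβ2
  obtain ⟨cu1, cu1x, cu1y⟩ := hc u1 hu1
  obtain ⟨cu2, cu2x, cu2y⟩ := hc u2 hu2
  have hx := integral_reflForm_pdx_nonneg hL1 hL2 hα1 hβ1 hu1 hu2 hα1₀ h1W h2E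
  have hy := integral_reflForm_pdy_nonneg hL1 hL2 hα2 hβ2 hu1 hu2 hα2₀ h1S h2N
  have hsum := mul_nonneg (one_half_pos (α := ℝ)).le (add_nonneg hx hy)
  rw [← integral_add (integrableOn_om (by unfold reflForm; fun_prop))
    (integrableOn_om (by unfold reflForm; fun_prop)), ← integral_const_mul] at hsum
  rw [← sub_nonneg, ← integral_const_mul,
    ← integral_sub (integrableOn_om (by unfold reflForm; fun_prop))
      (integrableOn_om (by unfold reflForm; fun_prop))]
  refine hsum.trans_eq (congrArg _ (funext fun p => ?_))
  unfold reflForm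
  ring

end Flux

end Rectangle

/-- Quasi-positivity of the variable-coefficient elliptic-mode operator
`𝒯₂ u = T1(x,y)·∂x u + T2(x,y)·∂y u` with `T1 = [[α1,β1],[β1,-α1]]`,
`T2 = [[α2,β2],[β2,-α2]]`, `α1, α2 ≥ c0 > 0`, on pairs `(u1,u2)` with `u1 = 0` on
`Γ_W ∪ Γ_S` and `u2 = 0` on `Γ_E ∪ Γ_N`:
`∫_Ω uᵗ·(T1·∂x u + T2·∂y u) ≥ -ω0·∫_Ω |u|²` where
`ω0 = (1/2)·sup √((∂x α1 + ∂y α2)² + (∂x β1 + ∂y β2)²)`. -/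
theorem stmt9 (L1 L2 c0 : ℝ) (hL1 : 0 < L1) (hL2 : 0 < L2) (hc0 : 0 < c0)
    (α1 β1 α2 β2 : ℝ × ℝ → ℝ)
    (hα1 : ContDiffOn ℝ 1 α1 (Rect L1 L2)) (hβ1 : ContDiffOn ℝ 1 β1 (Rect L1 L2))
    (hα2 : ContDiffOn ℝ 1 α2 (Rect L1 L2)) (hβ2 : ContDiffOn ℝ 1 β2 (Rect L1 L2))
    (hα1c : ∀ p ∈ Rect L1 L2, c0 ≤ α1 p) (hα2c : ∀ p ∈ Rect L1 L2, c0 ≤ α2 p)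
    (ω0 : ℝ)
    (hω0 : ω0 = (1 / 2) * sSup ((fun p =>
      Real.sqrt ((pdx L1 L2 α1 p + pdy L1 L2 α2 p) ^ 2
        + (pdx L1 L2 β1 p + pdy L1 L2 β2 p) ^ 2)) '' Rect L1 L2))
    (u1 u2 : ℝ × ℝ → ℝ)
    (hu1 : ContDiffOn ℝ 1 u1 (Rect L1 L2)) (hu2 : ContDiffOn ℝ 1 u2 (Rect L1 L2))
    (h1W : ∀ y ∈ Icc (0 : ℝ) L2, u1 (0, y) = 0)
    (h1S : ∀ x ∈ Icc (0 : ℝ) L1, u1 (x, 0) = 0)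
    (h2E : ∀ y ∈ Icc (0 : ℝ) L2, u2 (L1, y) = 0)
    (h2N : ∀ x ∈ Icc (0 : ℝ) L1, u2 (x, L2) = 0) :
    -ω0 * (∫ p in Om L1 L2, ((u1 p) ^ 2 + (u2 p) ^ 2))
      ≤ ∫ p in Om L1 L2,
          (u1 p * (α1 p * pdx L1 L2 u1 p + β1 p * pdx L1 L2 u2 p
              + α2 p * pdy L1 L2 u1 p + β2 p * pdy L1 L2 u2 p)
            + u2 p * (β1 p * pdx L1 L2 u1 p - α1 p * pdx L1 L2 u2 p
              + β2 p * pdy L1 L2 u1 p - α2 p * pdy L1 L2 u2 p)) := by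
  have cα1 := continuousOn_pdx hL1 hL2 hα1; have cβ1 := continuousOn_pdx hL1 hL2 hβ1
  have cα2 := continuousOn_pdy hL1 hL2 hα2; have cβ2 := continuousOn_pdy hL1 hL2 hβ2
  have hω0_ge : ∀ p ∈ Rect L1 L2, √((pdx L1 L2 α1 p + pdy L1 L2 α2 p) ^ 2
      + (pdx L1 L2 β1 p + pdy L1 L2 β2 p) ^ 2) ≤ 2 * ω0 := fun p hp => by
    rw [hω0, ← mul_assoc, mul_one_div_cancel two_ne_zero, one_mul]
    exact le_csSup (isCompact_rect.bddAbove_image (by fun_prop)) (mem_image_of_mem _ hp)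
  refine (neg_mul_integral_le_neg_half_integral_reflForm (cα1.add cα2) (cβ1.add cβ2)
    hu1.continuousOn hu2.continuousOn hω0_ge).trans
    ((neg_half_integral_reflForm_div_le hL1 hL2 hα1 hβ1 hα2 hβ2
      (fun p hp => hc0.le.trans (hα1c p hp)) (fun p hp => hc0.le.trans (hα2c p hp))
      hu1 hu2 h1W h1S h2E h2N).trans_eq (congrArg _ (funext fun p => ?_)))
  unfold reflForm
  ring
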